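/- Let G=(V,E) be a graph on n vertices, π a 2-partition of V, and v a vertex. Let Y = C_π(v) and Ȳ = V∖C_π(v)∖{v}. Then h₂(π) − h₂(π⊖v) = 2(n−1)c_π(v) − n(n−1) + 2∑_{u∈Y}c_π(u) − 2∑_{u∈Ȳ}c_π(u). -/

import Mathlib

/-! Flipping `v` complements its conflict set inside `V ∖ {v}`, so `c(v)` becomes `n - 1 - c(v)`,
while every other vertex loses its conflict with `v` (if `u ∈ Y`) or gains one (if `u ∈ Ȳ`).
Summing the resulting differences of squares and using `|Y| + |Ȳ| = n - 1` gives the formula. -/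

open Finset

variable {V : Type*} [Fintype V] [DecidableEq V]

/-- A 2-partition of the vertex set is given by an indicator `π : V → Bool`
(the two clusters are the preimages of `true` and `false`).
Two vertices `u ≠ v` are in conflict if they are in the same cluster but not adjacent,
or in different clusters but adjacent. -/
def Conflict (G : SimpleGraph V) (π : V → Bool) (u v : V) : Prop :=
  u ≠ v ∧ ((π u = π v) ↔ ¬ G.Adj u v)

instance (G : SimpleGraph V) [DecidableRel G.Adj] (π : V → Bool) (u v : V) :
    Decidable (Conflict G π u v) := by
  unfold Conflict; infer_instance

/-- `C_π(v)` : the set of vertices in conflict with `v`. -/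
def conflictSet (G : SimpleGraph V) [DecidableRel G.Adj] (π : V → Bool) (v : V) : Finset V :=
  Finset.univ.filter (fun u => Conflict G π v u)

/-- `c_π(v)` : the conflict number of `v`. -/
def cNum (G : SimpleGraph V) [DecidableRel G.Adj] (π : V → Bool) (v : V) : ℕ :=
  (conflictSet G π v).card

/-- Flipping the set `F` : moving every vertex of `F` to the other cluster. -/
def flipSet (π : V → Bool) (F : Finset V) : V → Bool :=
  fun v => if v ∈ F then !(π v) else π v

/-- `h₁(π)` : the total conflict number. -/
def h1 (G : SimpleGraph V) [DecidableRel G.Adj] (π : V → Bool) : ℕ :=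
  ∑ v, cNum G π v

/-- `h₂(π)` : the sum of squared conflict numbers. -/
def h2 (G : SimpleGraph V) [DecidableRel G.Adj] (π : V → Bool) : ℕ :=
  ∑ v, (cNum G π v) ^ 2

section Conflict

variable {α : Type*} {G : SimpleGraph α} {π : α → Bool} {u v w : α}

lemma conflict_comm : Conflict G π u v ↔ Conflict G π v u := by
  simp only [Conflict, ne_comm, eq_comm, G.adj_comm]

lemma not_conflict_self : ¬ Conflict G π v v := fun h => h.1 rfl

variable [DecidableEq α]

lemma conflict_flipSet_singleton_of_ne (hu : u ≠ v) (hw : w ≠ v) :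
    Conflict G (flipSet π {v}) u w ↔ Conflict G π u w := by
  simp [Conflict, flipSet, hu, hw]

lemma conflict_flipSet_singleton_self (hw : w ≠ v) :
    Conflict G (flipSet π {v}) v w ↔ ¬ Conflict G π v w := by
  simp only [Conflict, flipSet, mem_singleton, if_pos, if_neg hw, ne_eq, hw.symm,
    not_false_eq_true, true_and]
  cases π v <;> cases π w <;> simp

end Conflict

section ConflictSet

variable (G : SimpleGraph V) [DecidableRel G.Adj] (π : V → Bool) {u v : V}

lemma self_notMem_conflictSet : v ∉ conflictSet G π v := by
  simp [conflictSet, not_conflict_self]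

lemma mem_conflictSet_comm : u ∈ conflictSet G π v ↔ v ∈ conflictSet G π u := by
  simp [conflictSet, conflict_comm]

lemma conflictSet_flipSet_singleton_self :
    conflictSet G (flipSet π {v}) v = (conflictSet G π v)ᶜ.erase v := by
  ext w
  rcases eq_or_ne w v with rfl | hw
  · simp [conflictSet, not_conflict_self]
  · simp [conflictSet, conflict_flipSet_singleton_self hw, hw]

lemma conflictSet_flipSet_singleton_of_mem (hu : u ∈ conflictSet G π v) :
    conflictSet G (flipSet π {v}) u = (conflictSet G π u).erase v := by
  have hne : u ≠ v := ne_of_mem_of_not_mem hu (self_notMem_conflictSet G π)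
  ext w
  rcases eq_or_ne w v with rfl | hw
  · simpa [conflictSet, conflict_comm (v := w), conflict_flipSet_singleton_self hne] using hu
  · simp [conflictSet, conflict_flipSet_singleton_of_ne hne hw, hw]

lemma conflictSet_flipSet_singleton_of_notMem (hne : u ≠ v) (hu : u ∉ conflictSet G π v) :
    conflictSet G (flipSet π {v}) u = insert v (conflictSet G π u) := by
  ext w
  rcases eq_or_ne w v with rfl | hw
  · simpa [conflictSet, conflict_comm (v := w), conflict_flipSet_singleton_self hne] using hu
  · simp [conflictSet, conflict_flipSet_singleton_of_ne hne hw, hw]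

lemma cNum_flipSet_singleton_self_add :
    cNum G (flipSet π {v}) v + cNum G π v + 1 = Fintype.card V := by
  have hv : v ∈ (conflictSet G π v)ᶜ := mem_compl.2 (self_notMem_conflictSet G π)
  rw [cNum, cNum, conflictSet_flipSet_singleton_self, add_right_comm, card_erase_add_one hv,
    card_compl_add_card]

lemma cNum_flipSet_singleton_add_one_of_mem (hu : u ∈ conflictSet G π v) :
    cNum G (flipSet π {v}) u + 1 = cNum G π u := by
  rw [cNum, cNum, conflictSet_flipSet_singleton_of_mem G π hu,
    card_erase_add_one ((mem_conflictSet_comm G π).1 hu)]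

lemma cNum_flipSet_singleton_of_notMem (hne : u ≠ v) (hu : u ∉ conflictSet G π v) :
    cNum G (flipSet π {v}) u = cNum G π u + 1 := by
  rw [cNum, cNum, conflictSet_flipSet_singleton_of_notMem G π hne hu,
    card_insert_of_notMem (mt (mem_conflictSet_comm G π).2 hu)]

end ConflictSet

/-- computation in Lemma 9: with `Y = C_π(v)` and
`Ȳ = V ∖ C_π(v) ∖ {v}`,
`h₂(π) − h₂(π⊖v) = 2(n−1)c_π(v) − n(n−1) + 2∑_{u∈Y} c_π(u) − 2∑_{u∈Ȳ} c_π(u)`. -/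
theorem h2_flip_single_diff (G : SimpleGraph V) [DecidableRel G.Adj] (π : V → Bool) (v : V) :
    (h2 G π : ℤ) - (h2 G (flipSet π {v}) : ℤ) =
      2 * ((Fintype.card V : ℤ) - 1) * (cNum G π v : ℤ)
        - (Fintype.card V : ℤ) * ((Fintype.card V : ℤ) - 1)
        + 2 * ∑ u ∈ conflictSet G π v, (cNum G π u : ℤ)
        - 2 * ∑ u ∈ ((conflictSet G π v)ᶜ).erase v, (cNum G π u : ℤ) := by
  set Y := conflictSet G π v
  set Ybar := Yᶜ.erase v
  set π' := flipSet π {v}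
  have hsplit (f : V → ℤ) : ∑ u, f u = f v + ∑ u ∈ Y, f u + ∑ u ∈ Ybar, f u := by
    rw [← sum_add_sum_compl Y, ← add_sum_erase _ _ (mem_compl.2 (self_notMem_conflictSet G π))]
    ring
  have hY : ∑ u ∈ Y, ((cNum G π u : ℤ) ^ 2 - (cNum G π' u : ℤ) ^ 2)
      = ∑ u ∈ Y, (2 * (cNum G π u : ℤ) - 1) := by
    refine sum_congr rfl fun u hu => ?_
    rw [← cNum_flipSet_singleton_add_one_of_mem G π hu]
    push_cast
    ring
  have hYbar : ∑ u ∈ Ybar, ((cNum G π u : ℤ) ^ 2 - (cNum G π' u : ℤ) ^ 2)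
      = ∑ u ∈ Ybar, (-2 * (cNum G π u : ℤ) - 1) := by
    refine sum_congr rfl fun u hu => ?_
    rw [cNum_flipSet_singleton_of_notMem G π (ne_of_mem_erase hu)
      (mem_compl.1 (mem_of_mem_erase hu))]
    push_cast
    ring
  have hself : (cNum G π' v : ℤ) + cNum G π v + 1 = Fintype.card V := by
    exact_mod_cast cNum_flipSet_singleton_self_add G π (v := v)
  have hcardY : (#Y : ℤ) = cNum G π v := rfl
  have hcardYbar : (#Ybar : ℤ) = cNum G π' v := by
    rw [cNum, conflictSet_flipSet_singleton_self]
  simp only [h2, Nat.cast_sum, Nat.cast_pow]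
  rw [← sum_sub_distrib, hsplit, hY, hYbar]
  simp only [sum_sub_distrib, ← mul_sum, sum_const, nsmul_eq_mul, mul_one, hcardY, hcardYbar]
  linear_combination (cNum G π v - cNum G π' v - Fintype.card V : ℤ) * hself
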